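/- Let S be a finite restriction E-Ehresmann semigroup (both left and right restriction). Then S is EI-Ehresmann if and only if every idempotent of S belongs to E. -/
import Mathlib


def LtRel {S : Type*} [Semigroup S] (E : Set S) (a b : S) : Prop :=
  ∀ e ∈ E, (a * e = a ↔ b * e = b)

def RtRel {S : Type*} [Semigroup S] (E : Set S) (a b : S) : Prop :=
  ∀ e ∈ E, (e * a = a ↔ e * b = b)

def HtRel {S : Type*} [Semigroup S] (E : Set S) (a b : S) : Prop :=
  LtRel E a b ∧ RtRel E a b

/-- An `E`-Ehresmann structure on a semigroup `S`: `E` is a subsemilattice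
(commutative set of idempotents closed under multiplication), every `Lt`-class
and every `Rt`-class contains exactly one element of `E` (denoted `star a` and
`plus a` respectively), `Lt` is a right congruence and `Rt` is a left congruence
(expressed by the identities `(ab)* = (a*b)*` and `(ab)⁺ = (ab⁺)⁺`). -/
structure Ehresmann (S : Type*) [Semigroup S] (E : Set S) where
  star : S → S
  plus : S → S
  idem : ∀ e ∈ E, e * e = e
  comm : ∀ e ∈ E, ∀ f ∈ E, e * f = f * e
  mul_mem : ∀ e ∈ E, ∀ f ∈ E, e * f ∈ E
  star_mem : ∀ a : S, star a ∈ E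
  star_lt : ∀ a : S, LtRel E a (star a)
  star_unique : ∀ a : S, ∀ f ∈ E, LtRel E a f → f = star a
  plus_mem : ∀ a : S, plus a ∈ E
  plus_rt : ∀ a : S, RtRel E a (plus a)
  plus_unique : ∀ a : S, ∀ f ∈ E, RtRel E a f → f = plus a
  star_congr : ∀ a b : S, star (a * b) = star (star a * b)
  plus_congr : ∀ a b : S, plus (a * b) = plus (a * plus b)

def RightRestriction {S : Type*} [Semigroup S] {E : Set S} (M : Ehresmann S E) : Prop :=
  ∀ e ∈ E, ∀ a : S, e * a = a * M.star (e * a)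

def LeftRestriction {S : Type*} [Semigroup S] {E : Set S} (M : Ehresmann S E) : Prop :=
  ∀ e ∈ E, ∀ a : S, a * e = M.plus (a * e) * a

/-- A subset `G` of a semigroup is a group under the semigroup multiplication. -/
def IsGroupSubset {S : Type*} [Semigroup S] (G : Set S) : Prop :=
  (∀ a ∈ G, ∀ b ∈ G, a * b ∈ G) ∧
  ∃ u ∈ G, (∀ a ∈ G, u * a = a ∧ a * u = a) ∧
    (∀ a ∈ G, ∃ b ∈ G, a * b = u ∧ b * a = u)

/-- `S` is EI-Ehresmann (w.r.t. `E`) when every `Ht`-class of a projection is a group. -/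
def EIEhresmann {S : Type*} [Semigroup S] (E : Set S) : Prop :=
  ∀ e ∈ E, IsGroupSubset {a : S | HtRel E a e}

def SandwichSet {S : Type*} [Semigroup S] (f₁ f₂ : S) : Set S :=
  {h : S | h * h = h ∧ f₂ * h * f₁ = h ∧ f₁ * h * f₂ = f₁ * f₂}

def GreenR {S : Type*} [Semigroup S] (a b : S) : Prop :=
  insert a {x : S | ∃ s, a * s = x} = insert b {x : S | ∃ s, b * s = x}

def GreenL {S : Type*} [Semigroup S] (a b : S) : Prop :=
  insert a {x : S | ∃ s, s * a = x} = insert b {x : S | ∃ s, s * b = x}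

def GreenJ {S : Type*} [Semigroup S] (a b : S) : Prop :=
  insert a ({x : S | ∃ s, a * s = x} ∪ {x : S | ∃ s, s * a = x} ∪
      {x : S | ∃ s t, s * a * t = x}) =
  insert b ({x : S | ∃ s, b * s = x} ∪ {x : S | ∃ s, s * b = x} ∪
      {x : S | ∃ s t, s * b * t = x})

namespace Stmt7Aux

variable {S : Type*} [Semigroup S]

/-- `pw a n = a^(n+1)`. -/
def pw (a : S) : ℕ → S
  | 0 => a
  | n + 1 => pw a n * a

lemma pw_add (a : S) (m n : ℕ) : pw a (m + n + 1) = pw a m * pw a n := by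
  induction n with
  | zero => rfl
  | succ n ih =>
      show pw a (m + n + 1) * a = pw a m * (pw a n * a)
      rw [ih, mul_assoc]

lemma exists_idem_pw [Finite S] (a : S) : ∃ N, pw a N * pw a N = pw a N := by
  obtain ⟨i, j, hij, hpw⟩ := Finite.exists_ne_map_eq_of_infinite (pw a)
  wlog hlt : i < j generalizing i j
  · exact this j i hij.symm hpw.symm (by omega)
  set p := j - i with hp
  have hp1 : 1 ≤ p := by omega
  have hbase : pw a (i + p) = pw a i := by
    have : i + p = j := by omega
    rw [this, hpw]
  have hstep : ∀ m, i ≤ m → pw a (m + p) = pw a m := by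
    intro m hm
    rcases Nat.exists_eq_add_of_le hm with ⟨t, rfl⟩
    rcases t with _ | s
    · simpa using hbase
    · have h1 : i + (s + 1) + p = (i + p) + s + 1 := by omega
      have h2 : i + (s + 1) = i + s + 1 := by omega
      rw [h1, pw_add, hbase, h2, pw_add]
  have hsteps : ∀ k m, i ≤ m → pw a (m + k * p) = pw a m := by
    intro k
    induction k with
    | zero => intro m hm; simp
    | succ k ih =>
        intro m hm
        have h1 : m + (k + 1) * p = (m + k * p) + p := by ring
        rw [h1, hstep _ (by omega), ih m hm]
  refine ⟨(i + 1) * p - 1, ?_⟩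
  have hN1 : (i + 1) * p - 1 + 1 = (i + 1) * p := by
    have : 1 ≤ (i + 1) * p := by nlinarith
    omega
  have hNi : i ≤ (i + 1) * p - 1 := by nlinarith
  calc pw a ((i + 1) * p - 1) * pw a ((i + 1) * p - 1)
      = pw a (((i + 1) * p - 1) + ((i + 1) * p - 1) + 1) := (pw_add _ _ _).symm
    _ = pw a (((i + 1) * p - 1) + (i + 1) * p) := by rw [add_assoc, hN1]
    _ = pw a ((i + 1) * p - 1) := hsteps (i + 1) _ hNi

variable {E : Set S} (M : Ehresmann S E)

lemma star_of_mem {g : S} (hg : g ∈ E) : M.star g = g :=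
  (M.star_unique g g hg (fun _ _ => Iff.rfl)).symm

end Stmt7Aux

/-- A finite restriction (both left and right restriction) `E`-Ehresmann
semigroup is EI-Ehresmann iff every idempotent of `S` belongs to `E`
(i.e. `S` is weakly ample). -/

theorem stmt7 {S : Type*} [Semigroup S] [Finite S] (E : Set S) (M : Ehresmann S E)
    (hRR : RightRestriction M) (hLR : LeftRestriction M) :
    EIEhresmann E ↔ ∀ f : S, f * f = f → f ∈ E := by
  open Stmt7Aux in
  constructor
  · -- EI-Ehresmann → idempotents in E
    intro hEI f hf
    -- star f * f = f
    have hscongr : M.star f = M.star (M.star f * f) := by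
      have := M.star_congr f f; rwa [hf] at this
    have hfsf : f * M.star f = f :=
      (M.star_lt f (M.star f) (M.star_mem f)).mpr (M.idem _ (M.star_mem f))
    have hsf : M.star f * f = f := by
      have := hRR (M.star f) (M.star_mem f) f
      rw [← hscongr, hfsf] at this
      exact this
    -- f * plus f = f
    have hpcongr : M.plus f = M.plus (f * M.plus f) := by
      have := M.plus_congr f f; rwa [hf] at this
    have hpff : M.plus f * f = f :=
      (M.plus_rt f (M.plus f) (M.plus_mem f)).mpr (M.idem _ (M.plus_mem f))
    have hfp : f * M.plus f = f := by
      have := hLR (M.plus f) (M.plus_mem f) f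
      rw [← hpcongr, hpff] at this
      exact this
    -- star f = plus f
    have h2 : M.star f * M.plus f = M.plus f :=
      (M.plus_rt f (M.star f) (M.star_mem f)).mp hsf
    have h3 : f * M.plus f = f ↔ M.star f * M.plus f = M.star f :=
      M.star_lt f (M.plus f) (M.plus_mem f)
    have hsp : M.star f = M.plus f := by rw [← h3.mp hfp, h2]
    have he : M.star f ∈ E := M.star_mem f
    -- f ∈ Ht(e)
    have hfHt : HtRel E f (M.star f) :=
      ⟨M.star_lt f, by rw [hsp]; exact M.plus_rt f⟩
    obtain ⟨hcl, u, huG, huid, hinv⟩ := hEI (M.star f) he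
    have heG : HtRel E (M.star f) (M.star f) := ⟨fun _ _ => Iff.rfl, fun _ _ => Iff.rfl⟩
    -- u = e
    have hue : u * M.star f = u := (huG.1 (M.star f) he).mpr (M.idem _ he)
    have hue' : u * M.star f = M.star f := (huid (M.star f) heG).1
    have huee : u = M.star f := by rw [← hue, hue']
    -- only idempotent in a group is the identity
    obtain ⟨b, hbG, hfb, hbf⟩ := hinv f hfHt
    have hfe : f * M.star f = f := (hfHt.1 (M.star f) he).mpr (M.idem _ he)
    have : f = M.star f := by
      calc f = f * M.star f := hfe.symm
        _ = f * (f * b) := by rw [hfb, huee]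
        _ = (f * f) * b := (mul_assoc _ _ _).symm
        _ = f * b := by rw [hf]
        _ = M.star f := by rw [hfb, huee]
    rw [this]; exact he
  · -- idempotents in E → EI-Ehresmann
    intro hE e he
    have heG : HtRel E e e := ⟨fun _ _ => Iff.rfl, fun _ _ => Iff.rfl⟩
    -- closure
    have hcl : ∀ a ∈ {a : S | HtRel E a e}, ∀ b ∈ {a : S | HtRel E a e},
        a * b ∈ {a : S | HtRel E a e} := by
      intro a ha b hb
      have hae : a * e = a := (ha.1 e he).mpr (M.idem e he)
      have heb : e * b = b := (hb.2 e he).mpr (M.idem e he)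
      have hsa : M.star a = e := (M.star_unique a e he ha.1).symm
      have hsb : M.star b = e := (M.star_unique b e he hb.1).symm
      have hpa : M.plus a = e := (M.plus_unique a e he ha.2).symm
      have hpb : M.plus b = e := (M.plus_unique b e he hb.2).symm
      have hsab : M.star (a * b) = e := by
        rw [M.star_congr, hsa, heb, hsb]
      have hpab : M.plus (a * b) = e := by
        rw [M.plus_congr, hpb, hae, hpa]
      exact ⟨hsab ▸ M.star_lt (a * b), hpab ▸ M.plus_rt (a * b)⟩
    refine ⟨hcl, e, heG, ?_, ?_⟩
    · intro a ha
      exact ⟨(ha.2 e he).mpr (M.idem e he), (ha.1 e he).mpr (M.idem e he)⟩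
    · intro a ha
      have hpwG : ∀ n, pw a n ∈ {a : S | HtRel E a e} := by
        intro n
        induction n with
        | zero => exact ha
        | succ n ih => exact hcl _ ih _ ha
      obtain ⟨N, hN⟩ := exists_idem_pw a
      have hNE : pw a N ∈ E := hE _ hN
      have hNe : pw a N = e := by
        rw [← star_of_mem M hNE]
        exact (M.star_unique (pw a N) e he (hpwG N).1).symm
      rcases N with _ | n
      · -- a = e
        have hae : a = e := hNe
        exact ⟨a, ha, by rw [hae]; exact M.idem e he, by rw [hae]; exact M.idem e he⟩
      · refine ⟨pw a n, hpwG n, ?_, ?_⟩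
        · have h0 : pw a (0 + n + 1) = pw a 0 * pw a n := pw_add a 0 n
          simp only [Nat.zero_add] at h0
          rw [show a * pw a n = pw a 0 * pw a n from rfl, ← h0, hNe]
        · exact hNe
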